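/- arXiv:1307.6205 — 2 statements merged into one kernel-verified Lean document; each statement's English description precedes it below -/
import Mathlib

section
/- For the unit circle T in R^2 and any m ≥ 1, with A*_m = {e^{2πik/m} : k = 1,...,m} the equally spaced configuration, the polarization with s = 2 satisfies min_{x∈T} Σ_{j=1}^m |x − e^{2πij/m}|^{−2} = m^2/4. -/
open Real Complex Polynomial Finset
open scoped ENNReal

namespace CirclePolar

lemma prod_eq {m : ℕ} (hm : 1 ≤ m) {ζ : ℂ} (hζ : IsPrimitiveRoot ζ m) (y : ℂ) :
    ∏ j ∈ range m, (y - ζ ^ j) = y ^ m - 1 := by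
  have h := X_pow_sub_C_eq_prod hζ (by omega : 0 < m) (one_pow m)
  have h2 := congrArg (Polynomial.eval y) h
  simpa [eval_prod] using h2.symm

lemma sum_erase_eq {m : ℕ} (hm : 1 ≤ m) {ζ : ℂ} (hζ : IsPrimitiveRoot ζ m) (x : ℂ) :
    ∑ j ∈ range m, (∏ k ∈ (range m).erase j, (x - ζ ^ k)) = m * x ^ (m - 1) := by
  have hF : (fun y : ℂ => ∏ j ∈ range m, (y - ζ ^ j)) = fun y => y ^ m - 1 := by
    funext y; exact prod_eq hm hζ y
  have h1 : HasDerivAt (fun y : ℂ => ∏ j ∈ range m, (y - ζ ^ j))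
      (∑ j ∈ range m, (∏ k ∈ (range m).erase j, (x - ζ ^ k)) • (1 : ℂ)) x :=
    HasDerivAt.fun_finsetProd (fun i _ => (hasDerivAt_id x).sub_const _)
  have h2 : HasDerivAt (fun y : ℂ => ∏ j ∈ range m, (y - ζ ^ j)) (m * x ^ (m - 1)) x := by
    rw [hF]; exact (hasDerivAt_pow m x).sub_const 1
  have := h1.unique h2
  simpa using this

end CirclePolar

namespace CirclePolar

lemma factor_ne_zero {m : ℕ} (hm : 1 ≤ m) {ζ : ℂ} (hζ : IsPrimitiveRoot ζ m) {x : ℂ}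
    (hx : x ^ m ≠ 1) : ∀ j ∈ range m, x - ζ ^ j ≠ 0 := by
  have h : ∏ j ∈ range m, (x - ζ ^ j) ≠ 0 := by
    rw [prod_eq hm hζ]; exact sub_ne_zero.mpr hx
  exact Finset.prod_ne_zero_iff.mp h

lemma sum_inv_eq {m : ℕ} (hm : 1 ≤ m) {ζ : ℂ} (hζ : IsPrimitiveRoot ζ m) {x : ℂ}
    (hx : x ^ m ≠ 1) :
    ∑ j ∈ range m, (x - ζ ^ j)⁻¹ = m * x ^ (m - 1) / (x ^ m - 1) := by
  have hT : (x ^ m - 1) ≠ 0 := sub_ne_zero.mpr hx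
  have hne := factor_ne_zero hm hζ hx
  have hterm : ∀ j ∈ range m,
      (x - ζ ^ j)⁻¹ = (∏ k ∈ (range m).erase j, (x - ζ ^ k)) / (x ^ m - 1) := by
    intro j hj
    have ha := hne j hj
    have hmul : (x - ζ ^ j) * ∏ k ∈ (range m).erase j, (x - ζ ^ k) = x ^ m - 1 := by
      rw [Finset.mul_prod_erase (range m) (fun k => x - ζ ^ k) hj, prod_eq hm hζ]
    rw [eq_div_iff hT, ← hmul, inv_mul_cancel_left₀ ha]
  rw [Finset.sum_congr rfl hterm, ← Finset.sum_div, sum_erase_eq hm hζ]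

end CirclePolar

namespace CirclePolar

lemma key_sum {m : ℕ} (hm : 1 ≤ m) {ζ : ℂ} (hζ : IsPrimitiveRoot ζ m) {x : ℂ}
    (hx0 : x ≠ 0) (hx : x ^ m ≠ 1) :
    ∑ j ∈ range m, (x * ζ ^ j * ((x - ζ ^ j) ^ 2)⁻¹) =
      (m : ℂ) ^ 2 * x ^ m / (x ^ m - 1) ^ 2 := by
  have hT : (x ^ m - 1) ≠ 0 := sub_ne_zero.mpr hx
  have hne := factor_ne_zero hm hζ hx
  -- derivative of g = Σ (y - ζ^j)⁻¹
  have hg' : HasDerivAt (fun y : ℂ => ∑ j ∈ range m, (y - ζ ^ j)⁻¹)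
      (∑ j ∈ range m, (-1 / (x - ζ ^ j) ^ 2)) x := by
    apply HasDerivAt.fun_sum
    intro j hj
    exact ((hasDerivAt_id x).sub_const _).inv (hne j hj)
  -- derivative of h = m * (y^m / (y * (y^m - 1)))
  have hdx0 : x * (x ^ m - 1) ≠ 0 := mul_ne_zero hx0 hT
  have hh' : HasDerivAt (fun y : ℂ => (m : ℂ) * (y ^ m / (y * (y ^ m - 1))))
      ((m : ℂ) * ((↑m * x ^ (m - 1) * (x * (x ^ m - 1)) -
        x ^ m * (1 * (x ^ m - 1) + x * (↑m * x ^ (m - 1)))) / (x * (x ^ m - 1)) ^ 2)) x := by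
    exact HasDerivAt.const_mul _
      ((hasDerivAt_pow m x).div ((hasDerivAt_id x).mul ((hasDerivAt_pow m x).sub_const 1)) hdx0)
  -- g = h near x
  have hUopen : IsOpen {y : ℂ | y ≠ 0 ∧ y ^ m ≠ 1} := by
    have h1 : IsOpen {y : ℂ | y ≠ 0} := isOpen_ne
    have h2 : IsOpen {y : ℂ | y ^ m ≠ 1} := isOpen_ne.preimage (continuous_pow m)
    exact h1.inter h2
  have hEv : (fun y : ℂ => (m : ℂ) * (y ^ m / (y * (y ^ m - 1)))) =ᶠ[nhds x]
      (fun y : ℂ => ∑ j ∈ range m, (y - ζ ^ j)⁻¹) := by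
    filter_upwards [hUopen.mem_nhds ⟨hx0, hx⟩] with y hy
    have hy0 : y ≠ 0 := hy.1
    have hyT : y ^ m - 1 ≠ 0 := sub_ne_zero.mpr hy.2
    rw [sum_inv_eq hm hζ hy.2]
    have hypow : y ^ (m - 1) = y ^ m / y := by
      rw [eq_div_iff hy0, ← pow_succ, Nat.sub_add_cancel hm]
    rw [hypow]
    field_simp
  have hgh : HasDerivAt (fun y : ℂ => (m : ℂ) * (y ^ m / (y * (y ^ m - 1))))
      (∑ j ∈ range m, (-1 / (x - ζ ^ j) ^ 2)) x := hg'.congr_of_eventuallyEq hEv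
  have hGH := hgh.unique hh'
  -- decompose each term
  have hterm : ∀ j ∈ range m, x * ζ ^ j * ((x - ζ ^ j) ^ 2)⁻¹ =
      x ^ 2 * (-(-1 / (x - ζ ^ j) ^ 2)) - x * (x - ζ ^ j)⁻¹ := by
    intro j hj
    have ha := hne j hj
    field_simp
    ring
  rw [Finset.sum_congr rfl hterm, Finset.sum_sub_distrib, ← Finset.mul_sum, ← Finset.mul_sum,
    Finset.sum_neg_distrib, hGH, sum_inv_eq hm hζ hx]
  have hxpow : x ^ (m - 1) = x ^ m / x := by
    rw [eq_div_iff hx0, ← pow_succ, Nat.sub_add_cancel hm]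
  rw [hxpow]
  have hw0 : x ^ m ≠ 0 := pow_ne_zero m hx0
  field_simp
  ring

end CirclePolar

namespace CirclePolar

lemma conj_of_abs_one {z : ℂ} (h : ‖z‖ = 1) : (starRingEnd ℂ) z = z⁻¹ := by
  have h1 : z * (starRingEnd ℂ) z = 1 := by
    rw [Complex.mul_conj, ← Complex.sq_norm, h]; norm_num
  exact (inv_eq_of_mul_eq_one_right h1).symm

lemma sum_normSq_inv {m : ℕ} (hm : 1 ≤ m) {ζ : ℂ} (hζ : IsPrimitiveRoot ζ m)
    (hζa : ‖ζ‖ = 1) {x : ℂ} (hx1 : ‖x‖ = 1) (hx : x ^ m ≠ 1) :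
    ∑ j ∈ range m, ((‖x - ζ ^ j‖) ^ 2)⁻¹ =
      (m : ℝ) ^ 2 / (‖x ^ m - 1‖) ^ 2 := by
  have hx0 : x ≠ 0 := by
    intro h; rw [h] at hx1; simp at hx1
  have hz0 : ζ ≠ 0 := by
    intro h; rw [h] at hζa; simp at hζa
  have hcx : (starRingEnd ℂ) x = x⁻¹ := conj_of_abs_one hx1
  have hcz : ∀ j : ℕ, (starRingEnd ℂ) (ζ ^ j) = (ζ ^ j)⁻¹ := fun j => by
    rw [map_pow, conj_of_abs_one hζa, inv_pow]
  have hT : x ^ m - 1 ≠ 0 := sub_ne_zero.mpr hx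
  have hne := factor_ne_zero hm hζ hx
  apply Complex.ofReal_injective
  rw [Complex.ofReal_sum]
  have h1 : ∀ j ∈ range m, ((((‖x - ζ ^ j‖) ^ 2)⁻¹ : ℝ) : ℂ) =
      -(x * ζ ^ j * ((x - ζ ^ j) ^ 2)⁻¹) := by
    intro j hj
    have ha := hne j hj
    have hzj : (ζ : ℂ) ^ j ≠ 0 := pow_ne_zero _ hz0
    rw [Complex.ofReal_inv, Complex.sq_norm, Complex.normSq_eq_conj_mul_self, map_sub, hcx, hcz]
    have hq : (x⁻¹ - (ζ ^ j)⁻¹) * (x - ζ ^ j) = -(x - ζ ^ j) ^ 2 / (x * ζ ^ j) := by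
      field_simp
      ring
    rw [hq, inv_div, div_neg, div_eq_mul_inv]
  rw [Finset.sum_congr rfl h1, Finset.sum_neg_distrib, key_sum hm hζ hx0 hx]
  have hw0 : x ^ m ≠ 0 := pow_ne_zero m hx0
  rw [Complex.ofReal_div, Complex.sq_norm, Complex.normSq_eq_conj_mul_self, map_sub, map_one,
    map_pow, hcx, inv_pow]
  obtain ⟨w, hw⟩ : ∃ w, x ^ m = w := ⟨_, rfl⟩
  rw [hw] at hT hw0 ⊢
  push_cast
  have hq : (w⁻¹ - 1) * (w - 1) = -(w - 1) ^ 2 / w := by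
    field_simp
    ring
  rw [hq, div_div_eq_mul_div, div_neg]

end CirclePolar

namespace CirclePolar

lemma ennreal_sum_eq {m : ℕ} (hm : 1 ≤ m) {ζ : ℂ} (hζ : IsPrimitiveRoot ζ m)
    (hζa : ‖ζ‖ = 1) {x : ℂ} (hx1 : ‖x‖ = 1) (hx : x ^ m ≠ 1) :
    ∑ j ∈ range m, ((ENNReal.ofReal (‖x - ζ ^ j‖)) ^ 2)⁻¹ =
      ENNReal.ofReal ((m : ℝ) ^ 2 / (‖x ^ m - 1‖) ^ 2) := by
  have hne := factor_ne_zero hm hζ hx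
  have hterm : ∀ j ∈ range m, ((ENNReal.ofReal (‖x - ζ ^ j‖)) ^ 2)⁻¹ =
      ENNReal.ofReal (((‖x - ζ ^ j‖) ^ 2)⁻¹) := by
    intro j hj
    have hpos : 0 < ‖x - ζ ^ j‖ := norm_pos_iff.mpr (hne j hj)
    rw [← ENNReal.ofReal_pow (norm_nonneg _),
      ← ENNReal.ofReal_inv_of_pos (pow_pos hpos 2)]
  rw [Finset.sum_congr rfl hterm,
    ← ENNReal.ofReal_sum_of_nonneg (fun j _ => inv_nonneg.mpr (sq_nonneg _)),
    sum_normSq_inv hm hζ hζa hx1 hx]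

lemma const_eq (m : ℕ) : ((m : ℝ≥0∞) ^ 2) / 4 = ENNReal.ofReal ((m : ℝ) ^ 2 / 4) := by
  rw [ENNReal.ofReal_div_of_pos (by norm_num), ENNReal.ofReal_pow (by positivity),
    ENNReal.ofReal_natCast]
  norm_num

end CirclePolar

open CirclePolar in
/-- For the unit circle and the `m`-th roots of unity `ζ_j = e^{2πij/m}`, `m ≥ 1`,
the polarization with `s = 2` satisfies
`min_{x ∈ T} Σ_j |x - ζ_j|^{-2} = m²/4` (sums taken in `[0,∞]`, so `|x-ζ_j|^{-2} = ∞`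
when `x = ζ_j`); the minimum is attained. -/
theorem circle_polarization_s2 (m : ℕ) (hm : 1 ≤ m) :
    (∀ x : ℂ, ‖x‖ = 1 →
        ((m : ℝ≥0∞) ^ 2) / 4 ≤
          ∑ j : Fin m, ((ENNReal.ofReal
            ‖x - Complex.exp (2 * π * j / m * Complex.I)‖) ^ 2)⁻¹) ∧
      ∃ x : ℂ, ‖x‖ = 1 ∧
        ∑ j : Fin m, ((ENNReal.ofReal
            ‖x - Complex.exp (2 * π * j / m * Complex.I)‖) ^ 2)⁻¹ =
          ((m : ℝ≥0∞) ^ 2) / 4 := by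
  have hm0 : (m : ℝ) ≠ 0 := by positivity
  set ζ : ℂ := Complex.exp (2 * ↑π * Complex.I / ↑m) with hζdef
  have hζ : IsPrimitiveRoot ζ m := Complex.isPrimitiveRoot_exp m (by omega)
  have hζa : ‖ζ‖ = 1 := by
    rw [hζdef, show (2 * (π : ℂ) * Complex.I / (m : ℂ)) = ((2 * π / m : ℝ) : ℂ) * Complex.I by
      push_cast; ring]
    exact Complex.norm_exp_ofReal_mul_I _
  have hexp : ∀ j : ℕ, Complex.exp (2 * ↑π * (j : ℂ) / ↑m * Complex.I) = ζ ^ j := by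
    intro j
    rw [hζdef, ← Complex.exp_nat_mul]
    congr 1
    ring
  have hsum : ∀ x : ℂ,
      ∑ j : Fin m, ((ENNReal.ofReal
          (‖x - Complex.exp (2 * π * j / m * Complex.I)‖)) ^ 2)⁻¹ =
      ∑ j ∈ range m, ((ENNReal.ofReal (‖x - ζ ^ j‖)) ^ 2)⁻¹ := by
    intro x
    rw [← Fin.sum_univ_eq_sum_range
      (fun j => ((ENNReal.ofReal (‖x - ζ ^ j‖)) ^ 2)⁻¹) m]
    refine Finset.sum_congr rfl fun j _ => ?_
    rw [hexp j]
  constructor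
  · intro x hx1
    rw [hsum x]
    by_cases hx : x ^ m = 1
    · -- sum is infinite
      obtain ⟨j, hj, hj0⟩ : ∃ j ∈ range m, x - ζ ^ j = 0 := by
        have : ∏ j ∈ range m, (x - ζ ^ j) = 0 := by
          rw [prod_eq hm hζ, hx, sub_self]
        exact Finset.prod_eq_zero_iff.mp this
      have : ∑ j ∈ range m, ((ENNReal.ofReal (‖x - ζ ^ j‖)) ^ 2)⁻¹ = ⊤ := by
        rw [ENNReal.sum_eq_top]
        exact ⟨j, hj, by rw [hj0]; simp⟩
      rw [this]
      exact le_top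
    · rw [ennreal_sum_eq hm hζ hζa hx1 hx, const_eq]
      apply ENNReal.ofReal_le_ofReal
      have hb : ‖x ^ m - 1‖ ≤ 2 := by
        calc ‖x ^ m - 1‖ ≤ ‖x ^ m - 0‖ + ‖0 - 1‖ :=
              norm_sub_le_norm_sub_add_norm_sub _ _ _
        _ = 2 := by rw [sub_zero, norm_pow, hx1, one_pow]; norm_num
      have hb2 : (‖x ^ m - 1‖) ^ 2 ≤ 4 := by
        nlinarith [norm_nonneg (x ^ m - 1)]
      have hbpos : 0 < (‖x ^ m - 1‖) ^ 2 :=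
        pow_pos (norm_pos_iff.mpr (sub_ne_zero.mpr hx)) 2
      exact div_le_div_of_nonneg_left (by positivity) hbpos hb2
  · refine ⟨Complex.exp ((π / m : ℝ) * Complex.I), Complex.norm_exp_ofReal_mul_I _, ?_⟩
    set x : ℂ := Complex.exp ((π / m : ℝ) * Complex.I) with hxdef
    have hx1 : ‖x‖ = 1 := Complex.norm_exp_ofReal_mul_I _
    have hxm : x ^ m = -1 := by
      rw [hxdef, ← Complex.exp_nat_mul, show ((m : ℂ) * (((π / m : ℝ) : ℂ) * Complex.I))
          = (π : ℂ) * Complex.I by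
            have hmc : (m : ℂ) ≠ 0 := Nat.cast_ne_zero.mpr (by omega)
            push_cast
            field_simp]
      exact Complex.exp_pi_mul_I
    have hx : x ^ m ≠ 1 := by rw [hxm]; intro h; norm_num at h
    rw [hsum x, ennreal_sum_eq hm hζ hζa hx1 hx, const_eq, hxm]
    norm_num
end

section
/- Let m be a positive integer and θ a real number with e^{imθ} ≠ 1. Then Σ_{j=0}^{m−1} 1/(4 sin²((θ − 2πj/m)/2)) = m²/(4 sin²(mθ/2)). -/
open Real Finset

private lemma normSq_exp_sub_exp (a b : ℝ) :
    Complex.normSq (Complex.exp (a * Complex.I) - Complex.exp (b * Complex.I)) =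
      4 * Real.sin ((a - b) / 2) ^ 2 := by
  rw [Complex.exp_mul_I, Complex.exp_mul_I]
  have h1 : Real.sin ((a - b) / 2) ^ 2 = 1 / 2 - Real.cos (2 * ((a - b) / 2)) / 2 :=
    Real.sin_sq_eq_half_sub _
  rw [show 2 * ((a - b) / 2) = a - b by ring, Real.cos_sub] at h1
  simp only [Complex.normSq_apply, Complex.sub_re, Complex.sub_im, Complex.add_re, Complex.add_im,
    Complex.mul_re, Complex.mul_im, Complex.I_re, Complex.I_im, Complex.ofReal_re,
    Complex.ofReal_im, Complex.cos_ofReal_re, Complex.cos_ofReal_im, Complex.sin_ofReal_re,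
    Complex.sin_ofReal_im]
  nlinarith [Real.sin_sq_add_cos_sq a, Real.sin_sq_add_cos_sq b]

private lemma term_aux {z c : ℂ} (hz : z ≠ 0) (hc : c ≠ 0) (hne : z - c ≠ 0) :
    (1 : ℂ) / ((z - c) * (z⁻¹ - c⁻¹)) = z ^ 2 * (-1 / (z - c) ^ 2) + z * (z - c)⁻¹ := by
  have h1 : (z - c) * (z⁻¹ - c⁻¹) = -((z - c) ^ 2) / (z * c) := by
    rw [inv_sub_inv hz hc]; ring
  rw [h1, one_div_div, div_neg]
  field_simp
  ring

private lemma conj_exp_real_mul_I (r : ℝ) :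
    (starRingEnd ℂ) (Complex.exp (r * Complex.I)) = (Complex.exp (r * Complex.I))⁻¹ := by
  rw [← Complex.exp_conj, ← Complex.exp_neg]
  congr 1
  simp

section
variable {m : ℕ} {ω : ℂ}

private lemma prod_aux (hm : 0 < m) (hω : IsPrimitiveRoot ω m) (z : ℂ) :
    ∏ j ∈ Finset.range m, (z - ω ^ j) = z ^ m - 1 := by
  have := X_pow_sub_C_eq_prod hω hm (one_pow m)
  have h2 := congrArg (Polynomial.eval z) this
  simpa [Polynomial.eval_prod] using h2.symm

private lemma derivative_aux (hm : 0 < m) (hω : IsPrimitiveRoot ω m) (z : ℂ) :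
    ∑ j ∈ Finset.range m, ∏ k ∈ (Finset.range m).erase j, (z - ω ^ k)
      = m * z ^ (m - 1) := by
  have h1 : HasDerivAt (fun w : ℂ => ∏ j ∈ Finset.range m, (w - ω ^ j))
      (∑ j ∈ Finset.range m, ∏ k ∈ (Finset.range m).erase j, (z - ω ^ k)) z := by
    have := HasDerivAt.fun_finsetProd (u := Finset.range m) (f := fun j (w : ℂ) => w - ω ^ j)
      (f' := fun _ => 1) (x := z) (fun i _ => (hasDerivAt_id z).sub_const _)
    simpa using this
  have h2 : HasDerivAt (fun w : ℂ => ∏ j ∈ Finset.range m, (w - ω ^ j))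
      ((m : ℂ) * z ^ (m - 1)) z := by
    have h3 : (fun w : ℂ => ∏ j ∈ Finset.range m, (w - ω ^ j)) = fun w => w ^ m - 1 :=
      funext (prod_aux hm hω)
    rw [h3]
    exact (hasDerivAt_pow m z).sub_const 1
  exact h1.unique h2

private lemma sub_ne_aux (hω : IsPrimitiveRoot ω m) {z : ℂ} (hz : z ^ m ≠ 1) (j : ℕ) :
    z - ω ^ j ≠ 0 := by
  intro hc
  apply hz
  have : z = ω ^ j := by linear_combination hc
  rw [this, ← pow_mul, mul_comm, pow_mul, hω.pow_eq_one, one_pow]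

private lemma S1_aux (hm : 0 < m) (hω : IsPrimitiveRoot ω m) {z : ℂ} (hz : z ^ m ≠ 1) :
    ∑ j ∈ Finset.range m, (z - ω ^ j)⁻¹ = m * z ^ (m - 1) / (z ^ m - 1) := by
  have hz1 : z ^ m - 1 ≠ 0 := sub_ne_zero.mpr hz
  rw [← derivative_aux hm hω z, Finset.sum_div]
  refine Finset.sum_congr rfl fun j hj => ?_
  rw [eq_div_iff hz1, ← prod_aux hm hω z, ← Finset.mul_prod_erase _ _ hj,
    inv_mul_cancel_left₀ (sub_ne_aux hω hz j)]

private lemma S2_aux (hm : 0 < m) (hω : IsPrimitiveRoot ω m) {z : ℂ} (hz : z ^ m ≠ 1) :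
    ∑ j ∈ Finset.range m, (-1 / (z - ω ^ j) ^ 2) =
      ((m : ℂ) * ((m - 1 : ℕ) * z ^ (m - 1 - 1)) * (z ^ m - 1)
        - m * z ^ (m - 1) * ((m : ℕ) * z ^ (m - 1))) / (z ^ m - 1) ^ 2 := by
  have hz1 : z ^ m - 1 ≠ 0 := sub_ne_zero.mpr hz
  have hd1 : HasDerivAt (fun w : ℂ => ∑ j ∈ Finset.range m, (w - ω ^ j)⁻¹)
      (∑ j ∈ Finset.range m, (-1 / (z - ω ^ j) ^ 2)) z := by
    refine HasDerivAt.fun_sum fun j hj => ?_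
    exact ((hasDerivAt_id z).sub_const _).inv (sub_ne_aux hω hz j)
  have hd2 : HasDerivAt (fun w : ℂ => (m : ℂ) * w ^ (m - 1) / (w ^ m - 1))
      (((m : ℂ) * ((m - 1 : ℕ) * z ^ (m - 1 - 1)) * (z ^ m - 1)
        - m * z ^ (m - 1) * ((m : ℕ) * z ^ (m - 1))) / (z ^ m - 1) ^ 2) z :=
    ((hasDerivAt_pow (m - 1) z).const_mul (m : ℂ)).div ((hasDerivAt_pow m z).sub_const 1) hz1
  have hopen : IsOpen {w : ℂ | w ^ m ≠ 1} := isOpen_compl_singleton.preimage (continuous_pow m)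
  have hev : (fun w : ℂ => ∑ j ∈ Finset.range m, (w - ω ^ j)⁻¹)
      =ᶠ[nhds z] fun w => (m : ℂ) * w ^ (m - 1) / (w ^ m - 1) := by
    filter_upwards [hopen.mem_nhds hz] with w hw
    exact S1_aux hm hω hw
  rw [← hd1.deriv, ← hd2.deriv]
  exact hev.deriv_eq

end

/-- Trigonometric identity underlying circle polarization: for real `θ` with
`sin(mθ/2) ≠ 0`, `Σ_{j=0}^{m-1} 1/(4 sin²((θ - 2πj/m)/2)) = m²/(4 sin²(mθ/2))`. -/
theorem csc_sq_sum_identity (m : ℕ) (hm : 1 ≤ m) (θ : ℝ) (h : Real.sin (m * θ / 2) ≠ 0) :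
    ∑ j ∈ Finset.range m, 1 / (4 * Real.sin ((θ - 2 * π * j / m) / 2) ^ 2) =
      m ^ 2 / (4 * Real.sin (m * θ / 2) ^ 2) := by
  rcases eq_or_lt_of_le hm with hm1 | hm2
  · subst hm1
    norm_num [Finset.sum_range_one]
  · -- m ≥ 2
    have hm0 : 0 < m := by omega
    set z : ℂ := Complex.exp ((θ : ℝ) * Complex.I) with hzdef
    set ω : ℂ := Complex.exp (2 * π * Complex.I / m) with hωdef
    have hω : IsPrimitiveRoot ω m := Complex.isPrimitiveRoot_exp m (by omega)
    have hωj : ∀ j : ℕ, ω ^ j = Complex.exp (((2 * π * j / m : ℝ) : ℂ) * Complex.I) := by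
      intro j
      rw [hωdef, ← Complex.exp_nat_mul]
      congr 1
      push_cast
      ring
    have hzm : z ^ m = Complex.exp (((m * θ : ℝ) : ℂ) * Complex.I) := by
      rw [hzdef, ← Complex.exp_nat_mul]
      congr 1
      push_cast
      ring
    have hR : Complex.normSq (z ^ m - 1) = 4 * Real.sin (m * θ / 2) ^ 2 := by
      have h0 : Complex.exp (((0 : ℝ) : ℂ) * Complex.I) = 1 := by simp
      rw [hzm, ← h0, normSq_exp_sub_exp]
      norm_num
    have hzm1 : z ^ m ≠ 1 := by
      intro hc
      apply h
      have h2 : Complex.normSq (z ^ m - 1) = 0 := by rw [hc]; simp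
      rw [hR] at h2
      have h3 : Real.sin (↑m * θ / 2) ^ 2 = 0 := by linarith
      exact (pow_eq_zero_iff two_ne_zero).mp h3
    have hterm : ∀ j : ℕ, 4 * Real.sin ((θ - 2 * π * j / m) / 2) ^ 2
        = Complex.normSq (z - ω ^ j) := by
      intro j
      rw [hωj j, hzdef, normSq_exp_sub_exp]
    -- reduce to a complex identity
    have key : ∑ j ∈ Finset.range m, (1 : ℂ) / ((Complex.normSq (z - ω ^ j) : ℝ) : ℂ)
        = ((m : ℂ)) ^ 2 / ((Complex.normSq (z ^ m - 1) : ℝ) : ℂ) := by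
      have hz0 : z ≠ 0 := Complex.exp_ne_zero _
      have hω0 : ∀ j : ℕ, ω ^ j ≠ 0 := fun j => pow_ne_zero _ (Complex.exp_ne_zero _)
      have hcz : (starRingEnd ℂ) z = z⁻¹ := conj_exp_real_mul_I θ
      have hcω : ∀ j : ℕ, (starRingEnd ℂ) (ω ^ j) = (ω ^ j)⁻¹ := by
        intro j
        rw [hωj j]
        exact conj_exp_real_mul_I _
      have hz1 : z ^ m - 1 ≠ 0 := sub_ne_zero.mpr hzm1
      simp only [← Complex.mul_conj]
      have hstep : ∀ j ∈ Finset.range m,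
          (1 : ℂ) / ((z - ω ^ j) * (starRingEnd ℂ) (z - ω ^ j))
            = z ^ 2 * (-1 / (z - ω ^ j) ^ 2) + z * (z - ω ^ j)⁻¹ := by
        intro j hj
        have hne := sub_ne_aux hω hzm1 j
        rw [map_sub, hcz, hcω j]
        exact term_aux hz0 (hω0 j) hne
      rw [Finset.sum_congr rfl hstep, Finset.sum_add_distrib, ← Finset.mul_sum, ← Finset.mul_sum,
        S1_aux hm0 hω hzm1, S2_aux hm0 hω hzm1, map_sub, map_pow, hcz, map_one]
      obtain ⟨n, rfl⟩ : ∃ n, m = n + 2 := ⟨m - 2, by omega⟩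
      simp only [show n + 2 - 1 = n + 1 from rfl, show n + 1 - 1 = n from rfl]
      have hz1' : z ^ (n + 2) - 1 ≠ 0 := hz1
      have hzn0 : z ^ (n + 2) ≠ 0 := pow_ne_zero _ hz0
      have hrw : (z ^ (n + 2) - 1) * ((z⁻¹) ^ (n + 2) - 1)
          = -((z ^ (n + 2) - 1) ^ 2) / z ^ (n + 2) := by
        rw [inv_pow, show (z ^ (n + 2))⁻¹ - 1 = -(z ^ (n + 2) - 1) / z ^ (n + 2) from by
          field_simp; ring]
        ring
      rw [hrw, div_div_eq_mul_div, div_neg]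
      push_cast
      field_simp
      ring
    calc ∑ j ∈ Finset.range m, 1 / (4 * Real.sin ((θ - 2 * π * j / m) / 2) ^ 2)
        = ∑ j ∈ Finset.range m, 1 / (Complex.normSq (z - ω ^ j)) := by
          exact Finset.sum_congr rfl fun j _ => by rw [hterm j]
      _ = (m : ℝ) ^ 2 / (Complex.normSq (z ^ m - 1)) := by exact_mod_cast key
      _ = m ^ 2 / (4 * Real.sin (m * θ / 2) ^ 2) := by rw [hR]
end
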